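/- arXiv:2002.09002 — 5 statements merged into one kernel-verified Lean document; each statement's English description precedes it below -/
import Mathlib

section
/- The predicate Mc91(n,r) := (r = 91 ∨ (n > 100 ∧ r = n - 10)) on integers satisfies all three CHCs: (1) Mc91(n,r) ⇐ n > 100 ∧ r = n - 10; (2) Mc91(n,r) ⇐ n ≤ 100 ∧ Mc91(n+11,r') ∧ Mc91(r',r); (3) r = 91 ⇐ n ≤ 101 ∧ Mc91(n,r). -/
def Mc91 (n r : ℤ) : Prop := r = 91 ∨ (n > 100 ∧ r = n - 10)

theorem mc91_model :
    (∀ n r : ℤ, n > 100 ∧ r = n - 10 → Mc91 n r) ∧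
    (∀ n r r' : ℤ, n ≤ 100 ∧ Mc91 (n + 11) r' ∧ Mc91 r' r → Mc91 n r) ∧
    (∀ n r : ℤ, n ≤ 101 ∧ Mc91 n r → r = 91) := by
  unfold Mc91
  refine ⟨fun n r h => Or.inr h, fun n r r' h => ?_, fun n r h => ?_⟩
  · rcases h with ⟨h1, h2 | ⟨h2, h2'⟩, h3 | ⟨h3, h3'⟩⟩ <;> omega
  · rcases h with ⟨h1, h2 | ⟨h2, h2'⟩⟩ <;> omega
end

section
/- Define f : ℤ → ℤ recursively (via well-founded recursion on 101 - n) by f(n) = n - 10 if n > 100 and f(n) = f(f(n+11)) otherwise. Then for all n ≤ 101, f(n) = 91. -/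
theorem mc91_correct (f : ℤ → ℤ)
    (hf : ∀ n : ℤ, f n = if n > 100 then n - 10 else f (f (n + 11))) :
    ∀ n : ℤ, n ≤ 101 → f n = 91 := by
  have key : ∀ k : ℕ, ∀ n : ℤ, 101 - n ≤ k → n ≤ 101 → f n = 91 := by
    intro k
    induction k with
    | zero =>
      intro n h1 h2
      have hn : n = 101 := by omega
      subst hn
      rw [hf]
      norm_num
    | succ k ih =>
      intro n h1 h2
      rcases lt_or_ge n 101 with h | h
      · rcases lt_or_ge n 90 with h90 | h90
        · have e1 : f (n + 11) = 91 := ih (n + 11) (by omega) (by omega)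
          rw [hf n, if_neg (by omega), e1]
          exact ih 91 (by omega) (by omega)
        · have e1 : f (n + 11) = n + 1 := by
            rw [hf, if_pos (by omega)]; ring
          rw [hf n, if_neg (by omega), e1]
          exact ih (n + 1) (by omega) (by omega)
      · have hn : n = 101 := by omega
        subst hn
        rw [hf]
        norm_num
  intro n hn
  exact key (101 - n).toNat n (by omega) hn
end

section
/- Define TakeMax : (ℤ × ℤ) → (ℤ × ℤ) → (ℤ × ℤ) → Prop by TakeMax((a,a₀),(b,b₀),r) := (a ≥ b ∧ b₀ = b ∧ r = (a,a₀)) ∨ (a < b ∧ a₀ = a ∧ r = (b,b₀)), and define IncMax : ℤ → ℤ → Bool → Prop by IncMax(a,b,res) := ∃ a₀ b₀ c c₀, TakeMax((a,a₀),(b,b₀),(c,c₀)) ∧ c₀ = c + 1 ∧ res = decide (a₀ ≠ b₀). Then for all a b res, IncMax(a,b,res) implies res = true. -/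
def TakeMax (ma mb r : ℤ × ℤ) : Prop :=
  (ma.1 ≥ mb.1 ∧ mb.2 = mb.1 ∧ r = ma) ∨
  (ma.1 < mb.1 ∧ ma.2 = ma.1 ∧ r = mb)

def IncMax (a b : ℤ) (res : Bool) : Prop :=
  ∃ a₀ b₀ c c₀ : ℤ, TakeMax (a, a₀) (b, b₀) (c, c₀) ∧ c₀ = c + 1 ∧
    res = decide (a₀ ≠ b₀)

theorem inc_max_true : ∀ (a b : ℤ) (res : Bool), IncMax a b res → res = true := by
  rintro a b res ⟨a₀, b₀, c, c₀, h, hc, hres⟩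
  rcases h with ⟨h1, h2, h3⟩ | ⟨h1, h2, h3⟩ <;>
    simp_all [Prod.ext_iff] <;> omega
end

section
/- Consider the inductively defined predicate JustRecArr over heaps h, h' : ℤ → ℤ with constructors mirroring the naive array-based encoding: (1) JustRecArr(ma, h, h, true); (2) mb ≠ ma → JustRecArr(mb, h[mb ↦ b], h', r') → JustRecArr(ma, h, h', decide (h ma = h' ma)). Then there exist ma, h, h', r with JustRecArr(ma, h, h', r) and r = false; i.e., the goal clause r = true ⇐ JustRecArr(ma, h, h', r) fails for the least model. -/
inductive JustRecArr : ℤ → (ℤ → ℤ) → (ℤ → ℤ) → Bool → Prop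
  | base (ma : ℤ) (h : ℤ → ℤ) : JustRecArr ma h h true
  | call {ma mb b : ℤ} {h h' : ℤ → ℤ} {r' : Bool} :
      mb ≠ ma → JustRecArr mb (Function.update h mb b) h' r' →
      JustRecArr ma h h' (decide (h ma = h' ma))

theorem just_rec_arr_false_alarm :
    ∃ (ma : ℤ) (h h' : ℤ → ℤ) (r : Bool),
      JustRecArr ma h h' r ∧ r = false := by
  refine ⟨0, fun _ => 0,
    Function.update (Function.update (fun _ => 0) 1 0) 0 1, false, ?_, rfl⟩
  have key := JustRecArr.call (ma := 0) (h := fun _ => 0) (by norm_num : (1:ℤ) ≠ 0)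
      (JustRecArr.call (mb := 0) (b := 1) (by norm_num)
        (JustRecArr.base 0 (Function.update (Function.update (fun _ => 0) 1 0) 0 1)))
  simpa [Function.update] using key
end

section
/- The valuation Mc91p(n, r, h, h') := (h' r = 91 ∨ (n > 100 ∧ h' r = n - 10)) satisfies the CHCs: (1) Mc91p(n,r,h,h') ⇐ n > 100 ∧ h' = h[r ↦ n-10]; (2) Mc91p(n,r,h,h') ⇐ n ≤ 100 ∧ Mc91p(n+11, ms, h, h'') ∧ Mc91p(h'' ms, r, h'', h'); (3) h' r = 91 ⇐ n ≤ 101 ∧ Mc91p(n,r,h,h'). -/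
def Mc91p (n r : ℤ) (h h' : ℤ → ℤ) : Prop :=
  h' r = 91 ∨ (n > 100 ∧ h' r = n - 10)

theorem mc91p_model :
    (∀ (n r : ℤ) (h h' : ℤ → ℤ),
      n > 100 ∧ h' = Function.update h r (n - 10) → Mc91p n r h h') ∧
    (∀ (n r ms : ℤ) (h h' h'' : ℤ → ℤ),
      n ≤ 100 ∧ Mc91p (n + 11) ms h h'' ∧ Mc91p (h'' ms) r h'' h' →
      Mc91p n r h h') ∧
    (∀ (n r : ℤ) (h h' : ℤ → ℤ),
      n ≤ 101 ∧ Mc91p n r h h' → h' r = 91) := by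
  refine ⟨?_, ?_, ?_⟩
  · rintro n r h h' ⟨hn, rfl⟩
    right
    exact ⟨hn, by simp⟩
  · rintro n r ms h h' h'' ⟨hn, h1, h2⟩
    rcases h2 with h2 | ⟨hg, h2⟩
    · exact Or.inl h2
    · rcases h1 with h1 | ⟨hg1, h1⟩ <;> [left; left] <;> omega
  · rintro n r h h' ⟨hn, h1 | ⟨hg, h1⟩⟩
    · exact h1
    · omega
end
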